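/- arXiv:1204.3830 — 2 statements merged into one kernel-verified Lean document; each statement's English description precedes it below -/
import Mathlib

section
/- The number of configurations of the n²-puzzle is (n²)!, and for n ≥ 3 the reachable set from any configuration has cardinality (n²)! (all configurations are reachable). -/
/-!
Legal moves are closed under inversion, so `c.trans σ` is reachable from `c` whenever `σ` lies in
the subgroup generated by legal moves. In the `3 × 3` grid, explicit words
in the rotations of the unit squares equal the transpositions of an edge in the top row and of an
edge in the middle row. Every edge of the `n × n` grid (`n ≥ 3`) sits in one of these two positions
of some `3 × 3` window, i.e. of the image of an injective graph homomorphism, and pushing the words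
forward along it shows that every edge transposition is a product of legal moves. As the grid is
connected, edge transpositions generate the whole symmetric group.
-/

/-- The `n × n` grid graph: vertices `Fin n × Fin n`, edges between vertices at
`L₁`-distance `1`. -/
def gridGraph (n : ℕ) : SimpleGraph (Fin n × Fin n) :=
  SimpleGraph.fromRel fun a b => Nat.dist a.1.1 b.1.1 + Nat.dist a.2.1 b.2.1 = 1

/-- A legal single-step move of the fully occupied graph `G`: a permutation `σ` of the
vertices such that every robot stays put or moves along an edge, and no two robots swap
along an edge (no head-on collision).  Equivalently (since `σ` is a bijection), `σ`
synchronously rotates the robots along a collection of vertex-disjoint cycles of `G`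
(of length at least 3) and fixes all other robots. -/
def LegalMove {V : Type*} (G : SimpleGraph V) (σ : Equiv.Perm V) : Prop :=
  (∀ v, σ v = v ∨ G.Adj v (σ v)) ∧ ∀ v, σ v ≠ v → σ (σ v) ≠ v

/-- One legal move between configurations (bijections from robots to vertices). -/
def Step {R V : Type*} (G : SimpleGraph V) (c c' : R ≃ V) : Prop :=
  ∃ σ : Equiv.Perm V, LegalMove G σ ∧ c' = c.trans σ

open Equiv SimpleGraph Function

section LegalMoves

variable {V W : Type*} {G : SimpleGraph V} {H : SimpleGraph W}

def legalMoveGroup (G : SimpleGraph V) : Subgroup (Perm V) :=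
  Subgroup.closure {σ | LegalMove G σ}

theorem LegalMove.inv {σ : Perm V} (h : LegalMove G σ) : LegalMove G σ⁻¹ := by
  refine ⟨fun v => ?_, fun v hv hback => ?_⟩
  · rcases h.1 (σ⁻¹ v) with hfix | hadj
    · exact Or.inl (by simpa using hfix.symm)
    · exact Or.inr (by simpa using hadj.symm)
  · have hw : σ (σ⁻¹ v) ≠ σ⁻¹ v := by simpa using Ne.symm hv
    exact h.2 _ hw (by simpa using (congrArg σ hback).symm)

theorem reflTransGen_step_trans_of_mem {R : Type*} {σ : Perm V} (hσ : σ ∈ legalMoveGroup G)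
    (c : R ≃ V) : Relation.ReflTransGen (Step G) c (c.trans σ) := by
  induction hσ using Subgroup.closure_induction_left with
  | one => exact .refl
  | mul_left τ hτ σ _ ih => exact ih.tail ⟨τ, hτ, rfl⟩
  | inv_mul_cancel τ hτ σ _ ih => exact ih.tail ⟨τ⁻¹, LegalMove.inv hτ, rfl⟩

theorem Equiv.Perm.viaEmbedding_swap {α β : Type*} [DecidableEq α] [DecidableEq β] (ι : α ↪ β)
    (a b : α) : (swap a b).viaEmbedding ι = swap (ι a) (ι b) := by
  ext v
  by_cases hv : v ∈ Set.range ι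
  · obtain ⟨x, rfl⟩ := hv
    rw [Perm.viaEmbedding_apply, ι.injective.swap_apply]
  · rw [Perm.viaEmbedding_apply_of_notMem _ _ _ hv,
      swap_apply_of_ne_of_ne (fun h => hv ⟨a, h.symm⟩) (fun h => hv ⟨b, h.symm⟩)]

theorem LegalMove.viaEmbedding (f : H →g G) (hf : Injective f) {σ : Perm W}
    (h : LegalMove H σ) : LegalMove G (σ.viaEmbedding ⟨f, hf⟩) := by
  refine ⟨fun v => ?_, fun v hv => ?_⟩ <;> by_cases hrange : v ∈ Set.range f
  · obtain ⟨x, rfl⟩ := hrange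
    rw [show f x = (⟨f, hf⟩ : W ↪ V) x from rfl, Perm.viaEmbedding_apply]
    rcases h.1 x with hfix | hadj
    · exact Or.inl (congrArg f hfix)
    · exact Or.inr (f.map_adj hadj)
  · exact Or.inl (Perm.viaEmbedding_apply_of_notMem _ _ _ hrange)
  · obtain ⟨x, rfl⟩ := hrange
    rw [show f x = (⟨f, hf⟩ : W ↪ V) x from rfl, Perm.viaEmbedding_apply] at hv ⊢
    rw [Perm.viaEmbedding_apply]
    exact fun heq => h.2 x (fun hfix => hv (congrArg _ hfix)) (hf heq)
  · exact absurd (Perm.viaEmbedding_apply_of_notMem _ _ _ hrange) hv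

theorem swap_mem_legalMoveGroup_of_hom [DecidableEq V] [DecidableEq W] (f : H →g G)
    (hf : Injective f) {a b : W} (h : swap a b ∈ legalMoveGroup H) :
    swap (f a) (f b) ∈ legalMoveGroup G := by
  have hle : (legalMoveGroup H).map (Perm.viaEmbeddingHom ⟨f, hf⟩) ≤ legalMoveGroup G := by
    rw [legalMoveGroup, MonoidHom.map_closure, Subgroup.closure_le]
    rintro _ ⟨σ, hσ, rfl⟩
    exact Subgroup.subset_closure (LegalMove.viaEmbedding f hf hσ)
  simpa [Perm.viaEmbeddingHom_apply, Perm.viaEmbedding_swap] using hle ⟨_, h, rfl⟩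

theorem SimpleGraph.Preconnected.eq_top_of_swap_mem [Finite V] [DecidableEq V]
    (hG : G.Preconnected) {M : Subgroup (Perm V)} (hM : ∀ u v, G.Adj u v → swap u v ∈ M) :
    M = ⊤ := by
  have hswap (u v : V) : swap u v ∈ M := by
    induction (reachable_iff_reflTransGen u v).1 (hG u v) with
    | refl => rw [swap_self]; exact M.one_mem
    | tail _ hadj ih => exact SubmonoidClass.swap_mem_trans M ih (hM _ _ hadj)
  rw [eq_top_iff, ← Perm.closure_isSwap, Subgroup.closure_le]
  rintro _ ⟨u, v, -, rfl⟩
  exact hswap u v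

end LegalMoves

def SimpleGraph.Hom.boxProdMap {α β γ δ : Type*} {G₁ : SimpleGraph α} {G₂ : SimpleGraph β}
    {H₁ : SimpleGraph γ} {H₂ : SimpleGraph δ} (f : G₁ →g G₂) (g : H₁ →g H₂) :
    G₁.boxProd H₁ →g G₂.boxProd H₂ where
  toFun := Prod.map f g
  map_rel' := by
    rintro ⟨a, b⟩ ⟨a', b'⟩ (⟨h, rfl⟩ | ⟨h, rfl⟩)
    exacts [Or.inl ⟨f.map_adj h, rfl⟩, Or.inr ⟨g.map_adj h, rfl⟩]

section Grid

variable {n : ℕ}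

theorem gridGraph_eq_boxProd (n : ℕ) : gridGraph n = pathGraph n □ pathGraph n := by
  ext ⟨⟨a, _⟩, ⟨b, _⟩⟩ ⟨⟨c, _⟩, ⟨d, _⟩⟩
  simp only [gridGraph, fromRel_adj, boxProd_adj, pathGraph_adj, Nat.dist, ne_eq, Prod.mk.injEq,
    Fin.mk.injEq]
  omega

def pathGraphShift (m a : ℕ) (h : a + m ≤ n) : pathGraph m →g pathGraph n where
  toFun i := ⟨a + i, by omega⟩
  map_rel' {i j} hij := by simp only [pathGraph_adj] at hij ⊢; omega

theorem pathGraphShift_injective (m a : ℕ) (h : a + m ≤ n) : Injective (pathGraphShift m a h) :=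
  fun i j hij => Fin.ext (by simpa [pathGraphShift] using hij)

def pathGraphRev (m : ℕ) : pathGraph m →g pathGraph m where
  toFun := Fin.rev
  map_rel' {i j} hij := by simp only [pathGraph_adj, Fin.val_rev] at hij ⊢; omega

theorem exists_pathGraph_three_hom_mem (hn : 3 ≤ n) (r : Fin n) :
    ∃ ρ : pathGraph 3 →g pathGraph n, Injective ρ ∧ (ρ 0 = r ∨ ρ 1 = r) := by
  obtain ⟨r, hr⟩ := r
  by_cases h0 : r = 0
  · subst h0
    exact ⟨pathGraphShift 3 0 hn, pathGraphShift_injective .., Or.inl rfl⟩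
  by_cases h1 : r + 1 < n
  · refine ⟨pathGraphShift 3 (r - 1) (by omega), pathGraphShift_injective .., Or.inr ?_⟩
    ext; simp [pathGraphShift]; omega
  · refine ⟨(pathGraphShift 3 (r - 2) (by omega)).comp (pathGraphRev 3),
      (pathGraphShift_injective 3 (r - 2) (by omega)).comp Fin.rev_injective, Or.inl ?_⟩
    ext; simp [pathGraphShift, pathGraphRev]; omega

theorem exists_pathGraph_three_hom_edge (hn : 3 ≤ n) {c c' : Fin n}
    (h : (pathGraph n).Adj c c') :
    ∃ κ : pathGraph 3 →g pathGraph n, Injective κ ∧ s(κ 0, κ 1) = s(c, c') := by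
  wlog hcc' : c.1 + 1 = c'.1 generalizing c c'
  · obtain ⟨κ, hκ, hedge⟩ := this h.symm (by rw [pathGraph_adj] at h; omega)
    exact ⟨κ, hκ, hedge.trans Sym2.eq_swap⟩
  by_cases hfit : c.1 + 3 ≤ n
  · refine ⟨pathGraphShift 3 c hfit, pathGraphShift_injective .., ?_⟩
    congr 1
    ext; simp [pathGraphShift]; omega
  · refine ⟨(pathGraphShift 3 (c.1 - 1) (by omega)).comp (pathGraphRev 3),
      (pathGraphShift_injective 3 (c.1 - 1) (by omega)).comp Fin.rev_injective,
      Sym2.eq_swap.trans ?_⟩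
    congr 1 <;> ext <;> simp [pathGraphShift, pathGraphRev] <;> omega

theorem exists_gridGraph_three_hom_edge (hn : 3 ≤ n) {u v : Fin n × Fin n}
    (h : (gridGraph n).Adj u v) :
    ∃ f : gridGraph 3 →g gridGraph n, Injective f ∧
      (s(f (0, 0), f (0, 1)) = s(u, v) ∨ s(f (1, 0), f (1, 1)) = s(u, v)) := by
  obtain ⟨u₁, u₂⟩ := u
  obtain ⟨v₁, v₂⟩ := v
  rw [gridGraph_eq_boxProd] at h
  rw [gridGraph_eq_boxProd 3, gridGraph_eq_boxProd n]
  rcases h with ⟨hadj, rfl : u₂ = v₂⟩ | ⟨hadj, rfl : u₁ = v₁⟩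
  · obtain ⟨κ, hκ, hedge⟩ := exists_pathGraph_three_hom_edge hn hadj
    obtain ⟨ρ, hρ, hpos⟩ := exists_pathGraph_three_hom_mem hn u₂
    refine ⟨(κ.boxProdMap ρ).comp (boxProdComm (pathGraph 3) (pathGraph 3)).toHom,
      (hκ.prodMap hρ).comp (boxProdComm (pathGraph 3) (pathGraph 3)).injective, ?_⟩
    rcases hpos with hpos | hpos <;> [left; right] <;> rw [← hpos] <;>
      exact congrArg (Sym2.map (·, _)) hedge
  · obtain ⟨κ, hκ, hedge⟩ := exists_pathGraph_three_hom_edge hn hadj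
    obtain ⟨ρ, hρ, hpos⟩ := exists_pathGraph_three_hom_mem hn u₁
    refine ⟨ρ.boxProdMap κ, hρ.prodMap hκ, ?_⟩
    rcases hpos with hpos | hpos <;> [left; right] <;> rw [← hpos] <;>
      exact congrArg (Sym2.map (_, ·)) hedge

-- Coordinates add modulo `3`, so this rotates a unit square only when `p.1 ≠ 2` and `p.2 ≠ 2`.
def squareRotation (p : Fin 3 × Fin 3) : Perm (Fin 3 × Fin 3) :=
  [p, (p.1, p.2 + 1), (p.1 + 1, p.2 + 1), (p.1 + 1, p.2)].formPerm

theorem legalMove_squareRotation :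
    ∀ p : Fin 3 × Fin 3, p.1 ≠ 2 → p.2 ≠ 2 → LegalMove (gridGraph 3) (squareRotation p) := by
  simp only [LegalMove, gridGraph, fromRel_adj]
  decide

-- The middle-row edge is needed: for `n = 3` the middle row is the middle row of every window.
theorem swap_mem_legalMoveGroup_gridGraph_three :
    swap ((0, 0) : Fin 3 × Fin 3) (0, 1) ∈ legalMoveGroup (gridGraph 3) ∧
      swap ((1, 0) : Fin 3 × Fin 3) (1, 1) ∈ legalMoveGroup (gridGraph 3) := by
  have hmem (p : Fin 3 × Fin 3) (h₁ : p.1 ≠ 2) (h₂ : p.2 ≠ 2) :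
      squareRotation p ∈ legalMoveGroup (gridGraph 3) :=
    Subgroup.subset_closure (legalMove_squareRotation p h₁ h₂)
  have ha := hmem (0, 0) (by decide) (by decide)
  have hb := hmem (0, 1) (by decide) (by decide)
  have hc := hmem (1, 0) (by decide) (by decide)
  generalize hA : squareRotation (0, 0) = a at ha
  generalize hB : squareRotation (0, 1) = b at hb
  generalize hC : squareRotation (1, 0) = c at hc
  have hwords : swap ((0, 0) : Fin 3 × Fin 3) (0, 1) = c⁻¹ * b * c * b⁻¹ * a⁻¹ ∧
      swap ((1, 0) : Fin 3 × Fin 3) (1, 1) = a⁻¹ * b * c⁻¹ * b⁻¹ * c * a * a := by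
    subst hA hB hC
    decide
  rw [hwords.1, hwords.2]
  exact ⟨mul_mem (mul_mem (mul_mem (mul_mem (inv_mem hc) hb) hc) (inv_mem hb)) (inv_mem ha),
    mul_mem (mul_mem (mul_mem (mul_mem (mul_mem (mul_mem (inv_mem ha) hb) (inv_mem hc))
      (inv_mem hb)) hc) ha) ha⟩

theorem swap_mem_legalMoveGroup_gridGraph (hn : 3 ≤ n) {u v : Fin n × Fin n}
    (h : (gridGraph n).Adj u v) : swap u v ∈ legalMoveGroup (gridGraph n) := by
  obtain ⟨f, hf, hedge | hedge⟩ := exists_gridGraph_three_hom_edge hn h <;>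
  · obtain ⟨rfl, rfl⟩ | ⟨rfl, rfl⟩ := Sym2.eq_iff.1 hedge
    · exact swap_mem_legalMoveGroup_of_hom f hf (by simp [swap_mem_legalMoveGroup_gridGraph_three])
    · rw [swap_comm]
      exact swap_mem_legalMoveGroup_of_hom f hf (by simp [swap_mem_legalMoveGroup_gridGraph_three])

theorem legalMoveGroup_gridGraph_eq_top (hn : 3 ≤ n) : legalMoveGroup (gridGraph n) = ⊤ := by
  have hconn : (gridGraph n).Preconnected := by
    rw [gridGraph_eq_boxProd]
    exact (pathGraph_preconnected n).boxProd (pathGraph_preconnected n)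
  exact hconn.eq_top_of_swap_mem fun _ _ => swap_mem_legalMoveGroup_gridGraph hn

end Grid

/-- The number of configurations of the `n²`-puzzle (bijections from the `n²` labeled robots
to the vertices of the `n × n` grid) is `(n²)!`, and for `n ≥ 3` the set of configurations
reachable by legal moves from any configuration also has cardinality `(n²)!`
(all configurations are reachable). -/
theorem stmt8 (n : ℕ) (hn : 3 ≤ n) :
    Nat.card (Fin (n ^ 2) ≃ Fin n × Fin n) = (n ^ 2).factorial ∧
    ∀ c : Fin (n ^ 2) ≃ Fin n × Fin n,
      Nat.card {c' : Fin (n ^ 2) ≃ Fin n × Fin n |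
        Relation.ReflTransGen (Step (gridGraph n)) c c'} = (n ^ 2).factorial := by
  have hcard : Nat.card (Fin (n ^ 2) ≃ Fin n × Fin n) = (n ^ 2).factorial := by
    rw [Nat.card_eq_fintype_card,
      Fintype.card_equiv ((finCongr (sq n)).trans finProdFinEquiv.symm), Fintype.card_fin]
  refine ⟨hcard, fun c => ?_⟩
  have hreach : {c' | Relation.ReflTransGen (Step (gridGraph n)) c c'} = Set.univ := by
    refine Set.eq_univ_of_forall fun c' => ?_
    have hmem : c.symm.trans c' ∈ legalMoveGroup (gridGraph n) := by
      rw [legalMoveGroup_gridGraph_eq_top hn]; trivial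
    simpa [← Equiv.trans_assoc] using reflTransGen_step_trans_of_mem hmem c
  rw [hreach, Nat.card_univ, hcard]
end

section
/- The group generated by the rotations along all cycles of the 3×3 grid graph, acting as permutations of the 9 vertices, is the full symmetric group S_9. -/
/-- A rotation along a cycle of the graph `G`: a cyclic permutation of the vertices whose
support has at least 3 elements and which moves each vertex of its support to an adjacent
vertex (so the support forms a cycle of `G`, cyclically rotated by the permutation, all
other vertices being fixed). -/
def IsCycleRotation {V : Type*} [Fintype V] [DecidableEq V] (G : SimpleGraph V)
    (σ : Equiv.Perm V) : Prop :=
  σ.IsCycle ∧ 3 ≤ σ.support.card ∧ ∀ v ∈ σ.support, G.Adj v (σ v)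

open Equiv Equiv.Perm

abbrev Vtx := Fin 3 × Fin 3

instance : DecidableRel (gridGraph 3).Adj := fun a b => by
  unfold gridGraph; exact inferInstanceAs (Decidable (a ≠ b ∧ _))

/-- A nodup list of length ≥ 3 all of whose steps (including the wrap-around) are edges
gives a cycle rotation. -/
lemma isCycleRotation_formPerm (l : List Vtx) (h1 : l.Nodup) (h2 : 3 ≤ l.length)
    (h3 : ∀ v ∈ l, (gridGraph 3).Adj v (l.formPerm v)) :
    IsCycleRotation (gridGraph 3) l.formPerm := by
  have hsupp : l.formPerm.support = l.toFinset :=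
    List.support_formPerm_of_nodup l h1 (by
      rintro x rfl
      simp at h2)
  refine ⟨List.isCycle_formPerm h1 (by omega), ?_, ?_⟩
  · rw [hsupp, List.card_toFinset, List.dedup_eq_self.mpr h1]
    exact h2
  · intro v hv
    rw [hsupp, List.mem_toFinset] at hv
    exact h3 v hv

def lA : List Vtx := [(0,0),(0,1),(1,1),(1,0)]
def lB : List Vtx := [(0,1),(0,2),(1,2),(1,1)]
def lC : List Vtx := [(1,0),(1,1),(2,1),(2,0)]
def lD : List Vtx := [(1,1),(1,2),(2,2),(2,1)]
def lE : List Vtx := [(0,0),(0,1),(0,2),(1,2),(2,2),(2,1),(2,0),(1,0)]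
def lc : List Vtx := [(0,0),(0,2),(1,2),(2,2),(2,1),(2,0),(1,0),(0,1),(1,1)]

/-- The rotations along the cycles of the 3×3 grid graph generate the full symmetric group
on the 9 vertices. -/
theorem stmt9 :
    Subgroup.closure {σ : Equiv.Perm (Fin 3 × Fin 3) | IsCycleRotation (gridGraph 3) σ}
      = ⊤ := by
  set S : Set (Equiv.Perm Vtx) := {σ | IsCycleRotation (gridGraph 3) σ} with hS
  have hA : lA.formPerm ∈ Subgroup.closure S :=
    Subgroup.subset_closure (isCycleRotation_formPerm lA (by decide) (by decide) (by decide))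
  have hB : lB.formPerm ∈ Subgroup.closure S :=
    Subgroup.subset_closure (isCycleRotation_formPerm lB (by decide) (by decide) (by decide))
  have hC : lC.formPerm ∈ Subgroup.closure S :=
    Subgroup.subset_closure (isCycleRotation_formPerm lC (by decide) (by decide) (by decide))
  have hD : lD.formPerm ∈ Subgroup.closure S :=
    Subgroup.subset_closure (isCycleRotation_formPerm lD (by decide) (by decide) (by decide))
  have hE : lE.formPerm ∈ Subgroup.closure S :=
    Subgroup.subset_closure (isCycleRotation_formPerm lE (by decide) (by decide) (by decide))
  -- the 9-cycle
  have hcprod : lc.formPerm = lE.formPerm * lA.formPerm := Equiv.ext (by decide)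
  have hcmem : lc.formPerm ∈ Subgroup.closure S := hcprod ▸ mul_mem hE hA
  -- the transposition
  have htprod : swap ((0 : Fin 3), (1 : Fin 3)) (1,1)
      = lD.formPerm * lC.formPerm * lA.formPerm * lE.formPerm⁻¹ * lB.formPerm :=
    Equiv.ext (by decide)
  have htmem : swap ((0 : Fin 3), (1 : Fin 3)) (1,1) ∈ Subgroup.closure S := by
    rw [htprod]
    exact mul_mem (mul_mem (mul_mem (mul_mem hD hC) hA) (inv_mem hE)) hB
  have h1 : lc.formPerm.IsCycle := List.isCycle_formPerm (by decide) (by decide)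
  have h2 : lc.formPerm.support = Finset.univ := by
    rw [List.support_formPerm_of_nodup lc (by decide) (by decide)]
    decide
  have key := closure_cycle_adjacent_swap h1 h2 ((0 : Fin 3), (1 : Fin 3))
  have hcx : lc.formPerm ((0 : Fin 3), (1 : Fin 3)) = (1,1) := by decide
  rw [eq_top_iff, ← key, Subgroup.closure_le]
  intro g hg
  rcases hg with rfl | hg
  · exact hcmem
  · rcases hg with rfl
    rw [hcx]
    exact htmem
end
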